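/- For all vectors u, v in ℝ^d and r ≥ 2, ⟨|u|^{r-1}u - |v|^{r-1}v, u - v⟩ ≥ 2^{-(r-1)}|u - v|^{r+1}, where ⟨·,·⟩ is the Euclidean inner product. -/

import Mathlib

/-!
Expanding the inner product gives
`⟪a • u - b • v, u - v⟫ = (a + b)/2 * ‖u - v‖² + (a - b)(‖u‖² - ‖v‖²)/2`.
With `a = ‖u‖^(r-1)`, `b = ‖v‖^(r-1)` the second term is nonnegative, since both factors have
the sign of `‖u‖ - ‖v‖`. Convexity of `t ↦ t^(r-1)` bounds the first coefficient from below: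
`‖u - v‖^(r-1) ≤ (‖u‖ + ‖v‖)^(r-1) ≤ 2^(r-2) (a + b)`.
-/

open Real
open scoped NNReal

namespace Real

lemma add_rpow_le_two_rpow_mul_rpow_add_rpow {x y p : ℝ} (hx : 0 ≤ x) (hy : 0 ≤ y)
    (hp : 1 ≤ p) : (x + y) ^ p ≤ 2 ^ (p - 1) * (x ^ p + y ^ p) := by
  lift x to ℝ≥0 using hx
  lift y to ℝ≥0 using hy
  exact_mod_cast NNReal.rpow_add_le_mul_rpow_add_rpow x y hp

lemma rpow_sub_rpow_mul_sq_sub_sq_nonneg {x y p : ℝ} (hx : 0 ≤ x) (hy : 0 ≤ y) (hp : 0 ≤ p) :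
    0 ≤ (x ^ p - y ^ p) * (x ^ 2 - y ^ 2) := by
  rcases le_total x y with h | h
  · exact mul_nonneg_of_nonpos_of_nonpos (sub_nonpos.2 (rpow_le_rpow hx h hp))
      (sub_nonpos.2 (pow_le_pow_left₀ hx h 2))
  · exact mul_nonneg (sub_nonneg.2 (rpow_le_rpow hy h hp))
      (sub_nonneg.2 (pow_le_pow_left₀ hy h 2))

end Real

lemma two_rpow_neg_mul_norm_sub_rpow_le {E : Type*} [SeminormedAddCommGroup E] {p : ℝ}
    (hp : 1 ≤ p) (u v : E) :
    (2 : ℝ) ^ (-p) * ‖u - v‖ ^ p ≤ (‖u‖ ^ p + ‖v‖ ^ p) / 2 := by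
  rw [rpow_neg zero_le_two, inv_mul_le_iff₀ (rpow_pos_of_pos two_pos _)]
  calc ‖u - v‖ ^ p ≤ (‖u‖ + ‖v‖) ^ p :=
        rpow_le_rpow (norm_nonneg _) (norm_sub_le u v) (by linarith)
    _ ≤ 2 ^ (p - 1) * (‖u‖ ^ p + ‖v‖ ^ p) :=
        add_rpow_le_two_rpow_mul_rpow_add_rpow (norm_nonneg u) (norm_nonneg v) hp
    _ = 2 ^ p * ((‖u‖ ^ p + ‖v‖ ^ p) / 2) := by
        rw [rpow_sub_one two_ne_zero]
        ring

section InnerProductSpace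

variable {E : Type*} [NormedAddCommGroup E] [InnerProductSpace ℝ E]

lemma inner_smul_sub_smul_sub_eq (a b : ℝ) (u v : E) :
    inner ℝ (a • u - b • v) (u - v) =
      (a + b) / 2 * ‖u - v‖ ^ 2 + (a - b) * (‖u‖ ^ 2 - ‖v‖ ^ 2) / 2 := by
  rw [inner_sub_left, inner_sub_right, inner_sub_right, real_inner_smul_left,
    real_inner_smul_left, real_inner_smul_left, real_inner_smul_left,
    norm_sub_sq_real, real_inner_self_eq_norm_sq, real_inner_self_eq_norm_sq,
    real_inner_comm v u]
  ring

lemma mul_norm_sub_sq_le_inner_rpow_smul_sub {p : ℝ} (hp : 0 ≤ p) (u v : E) :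
    (‖u‖ ^ p + ‖v‖ ^ p) / 2 * ‖u - v‖ ^ 2 ≤
      inner ℝ (‖u‖ ^ p • u - ‖v‖ ^ p • v) (u - v) := by
  rw [inner_smul_sub_smul_sub_eq]
  have := rpow_sub_rpow_mul_sq_sub_sq_nonneg (norm_nonneg u) (norm_nonneg v) hp
  linarith

theorem two_rpow_mul_norm_sub_rpow_le_inner_rpow_smul_sub {r : ℝ} (hr : 2 ≤ r) (u v : E) :
    (2 : ℝ) ^ (-(r - 1)) * ‖u - v‖ ^ (r + 1) ≤
      inner ℝ (‖u‖ ^ (r - 1) • u - ‖v‖ ^ (r - 1) • v) (u - v) := by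
  have hsplit : ‖u - v‖ ^ (r + 1) = ‖u - v‖ ^ (r - 1) * ‖u - v‖ ^ 2 := by
    rw [← rpow_two, ← rpow_add' (norm_nonneg _) (by linarith)]
    ring_nf
  calc (2 : ℝ) ^ (-(r - 1)) * ‖u - v‖ ^ (r + 1)
      = (2 : ℝ) ^ (-(r - 1)) * ‖u - v‖ ^ (r - 1) * ‖u - v‖ ^ 2 := by rw [hsplit, mul_assoc]
    _ ≤ (‖u‖ ^ (r - 1) + ‖v‖ ^ (r - 1)) / 2 * ‖u - v‖ ^ 2 :=
        mul_le_mul_of_nonneg_right (two_rpow_neg_mul_norm_sub_rpow_le (by linarith) u v)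
          (sq_nonneg _)
    _ ≤ _ := mul_norm_sub_sq_le_inner_rpow_smul_sub (by linarith) u v

end InnerProductSpace

theorem stmt_1 (d : ℕ) (u v : EuclideanSpace ℝ (Fin d)) (r : ℝ) (hr : 2 ≤ r) :
    (inner ℝ (‖u‖ ^ (r - 1) • u - ‖v‖ ^ (r - 1) • v) (u - v) : ℝ) ≥
      (2 : ℝ) ^ (-(r - 1)) * ‖u - v‖ ^ (r + 1) :=
  two_rpow_mul_norm_sub_rpow_le_inner_rpow_smul_sub hr u v
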